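/- arXiv:2111.07208 — 4 statements merged into one kernel-verified Lean document; each statement's English description precedes it below -/
import Mathlib

section
/- For real (a,b,c) ≠ (0,0,0), the Hermitian matrix F₃ := a·iE₅ + b·i(E₂−E₃) + c·i(E₂−E₄) annihilates each of the four vectors e₁, e₂+e₃+e₅, e₄+e₆+e₇, e₈, and with f₁ := e₃−e₂, f₂ := e₂+e₃−2e₅, f₃ := e₆−e₄, f₄ := −2e₇+e₆+e₄, the two 2-dimensional subspaces span{f₁,f₂} and span{f₃,f₄} are invariant under F₃ and on each of them F₃ has eigenvalues λ and −λ, where λ := 2√(3a²+3b²+3c²+3bc) > 0. -/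
open Matrix Complex

noncomputable section

/-- Index type for three qubits: `(ℂ²)^{⊗3} ≅ ℂ⁸` with basis `|jkl⟩`. -/
abbrev Q3 := Fin 2 × Fin 2 × Fin 2

/-- Pauli matrix σx. -/
def sx : Matrix (Fin 2) (Fin 2) ℂ := !![0, 1; 1, 0]
/-- Pauli matrix σy. -/
def sy : Matrix (Fin 2) (Fin 2) ℂ := !![0, I; -I, 0]
/-- Pauli matrix σz. -/
def sz : Matrix (Fin 2) (Fin 2) ℂ := !![1, 0; 0, -1]

/-- Tensor (Kronecker) product of three 2×2 matrices, as an 8×8 matrix. -/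
def tens3 (A B C : Matrix (Fin 2) (Fin 2) ℂ) : Matrix Q3 Q3 ℂ :=
  fun p q => A p.1 q.1 * B p.2.1 q.2.1 * C p.2.2 q.2.2

/-- Computational basis vector `|jkl⟩`. -/
def ket (j k l : Fin 2) : Q3 → ℂ := fun p => if p = (j, k, l) then 1 else 0

/-- φ₀ = |000⟩. -/
def phi0 : Q3 → ℂ := ket 0 0 0
/-- φ₁ = |100⟩+|010⟩+|001⟩. -/
def phi1 : Q3 → ℂ := ket 1 0 0 + ket 0 1 0 + ket 0 0 1
/-- φ₂ = |110⟩+|011⟩+|101⟩. -/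
def phi2 : Q3 → ℂ := ket 1 1 0 + ket 0 1 1 + ket 1 0 1
/-- φ₃ = |111⟩. -/
def phi3 : Q3 → ℂ := ket 1 1 1

/-- iE₂ = σx⊗1⊗σx + σy⊗1⊗σy + σz⊗1⊗σz. -/
def iE2 : Matrix Q3 Q3 ℂ := tens3 sx 1 sx + tens3 sy 1 sy + tens3 sz 1 sz
/-- iE₃ = σx⊗σx⊗1 + σy⊗σy⊗1 + σz⊗σz⊗1. -/
def iE3 : Matrix Q3 Q3 ℂ := tens3 sx sx 1 + tens3 sy sy 1 + tens3 sz sz 1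
/-- iE₄ = 1⊗σx⊗σx + 1⊗σy⊗σy + 1⊗σz⊗σz. -/
def iE4 : Matrix Q3 Q3 ℂ := tens3 1 sx sx + tens3 1 sy sy + tens3 1 sz sz
/-- iE₅ = σx⊗(σy⊗σz − σz⊗σy) + σy⊗(σz⊗σx − σx⊗σz) + σz⊗(σx⊗σy − σy⊗σx). -/
def iE5 : Matrix Q3 Q3 ℂ := tens3 sx sy sz - tens3 sx sz sy + tens3 sy sz sx
  - tens3 sy sx sz + tens3 sz sx sy - tens3 sz sy sx

/-- F₃ = a·iE₅ + b·i(E₂−E₃) + c·i(E₂−E₄). -/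
def F3 (a b c : ℝ) : Matrix Q3 Q3 ℂ := (a:ℂ) • iE5 + (b:ℂ) • (iE2 - iE3) + (c:ℂ) • (iE2 - iE4)

/-- λ = 2√(3a²+3b²+3c²+3bc). -/
def lam (a b c : ℝ) : ℝ := 2 * Real.sqrt (3*a^2 + 3*b^2 + 3*c^2 + 3*b*c)

/-- Standard basis e₁,…,e₈ of ℂ⁸, in the order |000⟩,|001⟩,|010⟩,|011⟩,|100⟩,|101⟩,|110⟩,|111⟩. -/
def e1 : Q3 → ℂ := ket 0 0 0
def e2 : Q3 → ℂ := ket 0 0 1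
def e3 : Q3 → ℂ := ket 0 1 0
def e4 : Q3 → ℂ := ket 0 1 1
def e5 : Q3 → ℂ := ket 1 0 0
def e6 : Q3 → ℂ := ket 1 0 1
def e7 : Q3 → ℂ := ket 1 1 0
def e8 : Q3 → ℂ := ket 1 1 1

def f1 : Q3 → ℂ := e3 - e2
def f2 : Q3 → ℂ := e2 + e3 - (2:ℂ) • e5
def f3 : Q3 → ℂ := e6 - e4
def f4 : Q3 → ℂ := (-2:ℂ) • e7 + e6 + e4


set_option maxHeartbeats 4000000

section Aux

def Fent (a b c : ℝ) : Q3 → Q3 → ℂ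
  | (0,0,1), (0,0,1) => (-2:ℂ)*b
  | (0,0,1), (0,1,0) => (-2:ℂ)*Complex.I*a + (-2:ℂ)*c
  | (0,0,1), (1,0,0) => (2:ℂ)*Complex.I*a + (2:ℂ)*b + (2:ℂ)*c
  | (0,1,0), (0,0,1) => (2:ℂ)*Complex.I*a + (-2:ℂ)*c
  | (0,1,0), (0,1,0) => (2:ℂ)*b + (2:ℂ)*c
  | (0,1,0), (1,0,0) => (-2:ℂ)*Complex.I*a + (-2:ℂ)*b
  | (0,1,1), (0,1,1) => (-2:ℂ)*c
  | (0,1,1), (1,0,1) => (2:ℂ)*Complex.I*a + (-2:ℂ)*b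
  | (0,1,1), (1,1,0) => (-2:ℂ)*Complex.I*a + (2:ℂ)*b + (2:ℂ)*c
  | (1,0,0), (0,0,1) => (-2:ℂ)*Complex.I*a + (2:ℂ)*b + (2:ℂ)*c
  | (1,0,0), (0,1,0) => (2:ℂ)*Complex.I*a + (-2:ℂ)*b
  | (1,0,0), (1,0,0) => (-2:ℂ)*c
  | (1,0,1), (0,1,1) => (-2:ℂ)*Complex.I*a + (-2:ℂ)*b
  | (1,0,1), (1,0,1) => (2:ℂ)*b + (2:ℂ)*c
  | (1,0,1), (1,1,0) => (2:ℂ)*Complex.I*a + (-2:ℂ)*c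
  | (1,1,0), (0,1,1) => (2:ℂ)*Complex.I*a + (2:ℂ)*b + (2:ℂ)*c
  | (1,1,0), (1,0,1) => (-2:ℂ)*Complex.I*a + (-2:ℂ)*c
  | (1,1,0), (1,1,0) => (-2:ℂ)*b
  | _, _ => 0

set_option linter.unreachableTactic false
set_option linter.unusedTactic false

lemma F3_eq (a b c : ℝ) (p q : Q3) : F3 a b c p q = Fent a b c p q := by
  fin_cases p <;> fin_cases q <;>
    simp [F3, iE2, iE3, iE4, iE5, tens3, sx, sy, sz, Fent, Matrix.one_apply] <;> ring


lemma F3_e1 (a b c : ℝ) : (F3 a b c).mulVec e1 = 0 := by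
  funext p
  fin_cases p <;>
  · simp only [Matrix.mulVec, dotProduct, Fintype.sum_prod_type, Fin.sum_univ_two, F3_eq]
    simp [Fent, e1, ket, Prod.ext_iff]
    try ring

lemma F3_p1 (a b c : ℝ) : (F3 a b c).mulVec (e2 + e3 + e5) = 0 := by
  funext p
  fin_cases p <;>
  · simp only [Matrix.mulVec, dotProduct, Fintype.sum_prod_type, Fin.sum_univ_two, F3_eq]
    simp [Fent, e2, e3, e5, ket, Prod.ext_iff]
    try ring

lemma F3_p2 (a b c : ℝ) : (F3 a b c).mulVec (e4 + e6 + e7) = 0 := by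
  funext p
  fin_cases p <;>
  · simp only [Matrix.mulVec, dotProduct, Fintype.sum_prod_type, Fin.sum_univ_two, F3_eq]
    simp [Fent, e4, e6, e7, ket, Prod.ext_iff]
    try ring

lemma F3_e8 (a b c : ℝ) : (F3 a b c).mulVec e8 = 0 := by
  funext p
  fin_cases p <;>
  · simp only [Matrix.mulVec, dotProduct, Fintype.sum_prod_type, Fin.sum_univ_two, F3_eq]
    simp [Fent, e8, ket, Prod.ext_iff]
    try ring

lemma F3_f1 (a b c : ℝ) :
    (F3 a b c).mulVec f1 = (3*(c:ℂ)) • f1 + ((-2:ℂ)*a*I + 2*b + c) • f2 := by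
  funext p
  fin_cases p <;>
  · simp only [Matrix.mulVec, dotProduct, Fintype.sum_prod_type, Fin.sum_univ_two, F3_eq]
    simp [Fent, f1, f2, e2, e3, e5, ket, Prod.ext_iff]
    try ring

lemma F3_f2 (a b c : ℝ) :
    (F3 a b c).mulVec f2 = ((6:ℂ)*a*I + 6*b + 3*c) • f1 - (3*(c:ℂ)) • f2 := by
  funext p
  fin_cases p <;>
  · simp only [Matrix.mulVec, dotProduct, Fintype.sum_prod_type, Fin.sum_univ_two, F3_eq]
    simp [Fent, f1, f2, e2, e3, e5, ket, Prod.ext_iff]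
    try ring

lemma F3_f3 (a b c : ℝ) :
    (F3 a b c).mulVec f3 = (3*(b:ℂ)) • f3 + ((2:ℂ)*a*I + b + 2*c) • f4 := by
  funext p
  fin_cases p <;>
  · simp only [Matrix.mulVec, dotProduct, Fintype.sum_prod_type, Fin.sum_univ_two, F3_eq]
    simp [Fent, f3, f4, e4, e6, e7, ket, Prod.ext_iff]
    try ring

lemma F3_f4 (a b c : ℝ) :
    (F3 a b c).mulVec f4 = ((-6:ℂ)*a*I + 3*b + 6*c) • f3 - (3*(b:ℂ)) • f4 := by
  funext p
  fin_cases p <;>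
  · simp only [Matrix.mulVec, dotProduct, Fintype.sum_prod_type, Fin.sum_univ_two, F3_eq]
    simp [Fent, f3, f4, e4, e6, e7, ket, Prod.ext_iff]
    try ring

/-- f1, f2 are linearly independent (pointwise check). -/
lemma indep12 (α β : ℂ) (h : α • f1 + β • f2 = 0) : α = 0 ∧ β = 0 := by
  have h1 := congrFun h ((0:Fin 2), (1:Fin 2), (0:Fin 2))
  have h2 := congrFun h ((0:Fin 2), (0:Fin 2), (1:Fin 2))
  simp [f1, f2, e2, e3, e5, ket, Prod.ext_iff] at h1 h2
  constructor
  · linear_combination (h1 - h2)/2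
  · linear_combination (h1 + h2)/2

lemma indep34 (α β : ℂ) (h : α • f3 + β • f4 = 0) : α = 0 ∧ β = 0 := by
  have h1 := congrFun h ((1:Fin 2), (0:Fin 2), (1:Fin 2))
  have h2 := congrFun h ((0:Fin 2), (1:Fin 2), (1:Fin 2))
  simp [f3, f4, e4, e6, e7, ket, Prod.ext_iff] at h1 h2
  constructor
  · linear_combination (h1 - h2)/2
  · linear_combination (h1 + h2)/2

/-- Invariance of a 2-generated subspace from the generator images. -/
lemma invariant_block (F : Matrix Q3 Q3 ℂ) (g1 g2 : Q3 → ℂ) (p q r : ℂ)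
    (h1 : F.mulVec g1 = p • g1 + q • g2)
    (h2 : F.mulVec g2 = r • g1 - p • g2) :
    ∀ u ∈ Submodule.span ℂ ({g1, g2} : Set (Q3 → ℂ)),
      F.mulVec u ∈ Submodule.span ℂ ({g1, g2} : Set (Q3 → ℂ)) := by
  intro u hu
  have m1 : g1 ∈ Submodule.span ℂ ({g1, g2} : Set (Q3 → ℂ)) :=
    Submodule.subset_span (Set.mem_insert _ _)
  have m2 : g2 ∈ Submodule.span ℂ ({g1, g2} : Set (Q3 → ℂ)) :=
    Submodule.subset_span (Set.mem_insert_of_mem _ rfl)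
  induction hu using Submodule.span_induction with
  | mem x hx =>
    rcases hx with hx | hx
    · subst hx; rw [h1]
      exact Submodule.add_mem _ (Submodule.smul_mem _ _ m1) (Submodule.smul_mem _ _ m2)
    · rcases hx with rfl
      rw [h2]
      exact Submodule.sub_mem _ (Submodule.smul_mem _ _ m1) (Submodule.smul_mem _ _ m2)
  | zero => simp [Matrix.mulVec_zero]
  | add x y _ _ hx hy => rw [Matrix.mulVec_add]; exact Submodule.add_mem _ hx hy
  | smul t x _ hx => rw [Matrix.mulVec_smul]; exact Submodule.smul_mem _ _ hx

/-- Eigenvector for the 2×2 block `[[p, r], [q, -p]]` with eigenvalue μ, μ² = p² + rq. -/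
lemma eig_block (F : Matrix Q3 Q3 ℂ) (g1 g2 : Q3 → ℂ) (p q r : ℂ) (μ : ℂ)
    (h1 : F.mulVec g1 = p • g1 + q • g2)
    (h2 : F.mulVec g2 = r • g1 - p • g2)
    (hmu : μ^2 = p^2 + r*q)
    (hmu0 : μ ≠ 0)
    (hind : ∀ α β : ℂ, α • g1 + β • g2 = 0 → α = 0 ∧ β = 0) :
    ∃ u ∈ Submodule.span ℂ ({g1, g2} : Set (Q3 → ℂ)), u ≠ 0 ∧
      F.mulVec u = μ • u := by
  obtain ⟨m, hm⟩ : ∃ m : ℂ, μ = m := ⟨_, rfl⟩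
  rw [hm] at hmu hmu0 ⊢
  have m1 : g1 ∈ Submodule.span ℂ ({g1, g2} : Set (Q3 → ℂ)) :=
    Submodule.subset_span (Set.mem_insert _ _)
  have m2 : g2 ∈ Submodule.span ℂ ({g1, g2} : Set (Q3 → ℂ)) :=
    Submodule.subset_span (Set.mem_insert_of_mem _ rfl)
  by_cases hq : q = 0 ∧ m = -p
  · -- use u = r • g1 + (m - p) • g2
    refine ⟨r • g1 + (m - p) • g2,
      Submodule.add_mem _ (Submodule.smul_mem _ _ m1) (Submodule.smul_mem _ _ m2), ?_, ?_⟩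
    · intro h0
      obtain ⟨-, hb⟩ := hind _ _ h0
      apply hmu0
      have hp : m + p = 0 := by linear_combination hq.2
      linear_combination (hb + hp)/2
    · rw [Matrix.mulVec_add, Matrix.mulVec_smul, Matrix.mulVec_smul, h1, h2]
      match_scalars
      all_goals first | ring1 | linear_combination -hmu
  · -- use u = (m + p) • g1 + q • g2
    refine ⟨(m + p) • g1 + q • g2,
      Submodule.add_mem _ (Submodule.smul_mem _ _ m1) (Submodule.smul_mem _ _ m2), ?_, ?_⟩
    · intro h0
      obtain ⟨ha, hb⟩ := hind _ _ h0
      exact hq ⟨hb, by linear_combination ha⟩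
    · rw [Matrix.mulVec_add, Matrix.mulVec_smul, Matrix.mulVec_smul, h1, h2]
      match_scalars
      all_goals first | ring1 | linear_combination -hmu

end Aux

/-- for (a,b,c) ≠ (0,0,0), F₃ annihilates e₁, e₂+e₃+e₅, e₄+e₆+e₇, e₈;
the subspaces span{f₁,f₂} and span{f₃,f₄} are invariant under F₃, and on each of them
F₃ has eigenvalues λ and −λ, where λ = 2√(3a²+3b²+3c²+3bc) > 0. -/
theorem statement3 (a b c : ℝ) (habc : (a, b, c) ≠ (0, 0, 0)) :
    0 < lam a b c ∧
    (F3 a b c).mulVec e1 = 0 ∧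
    (F3 a b c).mulVec (e2 + e3 + e5) = 0 ∧
    (F3 a b c).mulVec (e4 + e6 + e7) = 0 ∧
    (F3 a b c).mulVec e8 = 0 ∧
    (∀ u ∈ Submodule.span ℂ ({f1, f2} : Set (Q3 → ℂ)),
      (F3 a b c).mulVec u ∈ Submodule.span ℂ ({f1, f2} : Set (Q3 → ℂ))) ∧
    (∀ u ∈ Submodule.span ℂ ({f3, f4} : Set (Q3 → ℂ)),
      (F3 a b c).mulVec u ∈ Submodule.span ℂ ({f3, f4} : Set (Q3 → ℂ))) ∧
    (∃ u ∈ Submodule.span ℂ ({f1, f2} : Set (Q3 → ℂ)), u ≠ 0 ∧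
      (F3 a b c).mulVec u = ((lam a b c : ℝ) : ℂ) • u) ∧
    (∃ u ∈ Submodule.span ℂ ({f1, f2} : Set (Q3 → ℂ)), u ≠ 0 ∧
      (F3 a b c).mulVec u = (-(lam a b c : ℝ) : ℂ) • u) ∧
    (∃ u ∈ Submodule.span ℂ ({f3, f4} : Set (Q3 → ℂ)), u ≠ 0 ∧
      (F3 a b c).mulVec u = ((lam a b c : ℝ) : ℂ) • u) ∧
    (∃ u ∈ Submodule.span ℂ ({f3, f4} : Set (Q3 → ℂ)), u ≠ 0 ∧
      (F3 a b c).mulVec u = (-(lam a b c : ℝ) : ℂ) • u) := by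
  
  -- positivity of the discriminant
  have key : 0 < 3*a^2 + 3*b^2 + 3*c^2 + 3*b*c := by
    have h : ¬ (a = 0 ∧ b = 0 ∧ c = 0) := by
      intro ⟨ha, hb, hc⟩; exact habc (by simp [ha, hb, hc])
    rcases Classical.em (a = 0) with ha | ha
    · rcases Classical.em (b = 0) with hb | hb
      · have hc : c ≠ 0 := fun hc => h ⟨ha, hb, hc⟩
        nlinarith [sq_nonneg (b+c), sq_pos_of_ne_zero hc]
      · nlinarith [sq_nonneg (b+c), sq_nonneg c, sq_pos_of_ne_zero hb, sq_nonneg a]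
    · nlinarith [sq_nonneg (b+c), sq_nonneg b, sq_nonneg c, sq_pos_of_ne_zero ha]
  have hlam : 0 < lam a b c := by
    have := Real.sqrt_pos.mpr key
    simp only [lam]; linarith
  have hlamsq : ((lam a b c : ℝ) : ℂ)^2 = ((12*a^2 + 12*b^2 + 12*c^2 + 12*b*c : ℝ) : ℂ) := by
    have h4 : (lam a b c)^2 = 12*a^2 + 12*b^2 + 12*c^2 + 12*b*c := by
      rw [lam, mul_pow, Real.sq_sqrt key.le]; ring
    rw [← h4]; push_cast; ring
  have hlamC : ((lam a b c : ℝ) : ℂ) ≠ 0 := by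
    exact_mod_cast ne_of_gt hlam
  -- vanishing
  have hz1 : (F3 a b c).mulVec e1 = 0 := F3_e1 a b c
  have hz2 : (F3 a b c).mulVec (e2 + e3 + e5) = 0 := F3_p1 a b c
  have hz3 : (F3 a b c).mulVec (e4 + e6 + e7) = 0 := F3_p2 a b c
  have hz4 : (F3 a b c).mulVec e8 = 0 := F3_e8 a b c
  -- block actions
  have hf1 := F3_f1 a b c
  have hf2 := F3_f2 a b c
  have hf3 := F3_f3 a b c
  have hf4 := F3_f4 a b c
  -- eigenvalue equations for the two blocks
  have hmu1p : ((lam a b c : ℝ) : ℂ)^2 = (3*(c:ℂ))^2 + ((6:ℂ)*a*I + 6*b + 3*c) * ((-2:ℂ)*a*I + 2*b + c) := by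
    rw [hlamsq]; push_cast
    linear_combination ((12:ℂ)*(a:ℂ)^2) * Complex.I_sq
  have hmu2p : ((lam a b c : ℝ) : ℂ)^2 = (3*(b:ℂ))^2 + ((-6:ℂ)*a*I + 3*b + 6*c) * ((2:ℂ)*a*I + b + 2*c) := by
    rw [hlamsq]; push_cast
    linear_combination ((12:ℂ)*(a:ℂ)^2) * Complex.I_sq
  have hmu1m : (-((lam a b c : ℝ) : ℂ))^2 = (3*(c:ℂ))^2 + ((6:ℂ)*a*I + 6*b + 3*c) * ((-2:ℂ)*a*I + 2*b + c) := by
    rw [neg_sq]; exact hmu1p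
  have hmu2m : (-((lam a b c : ℝ) : ℂ))^2 = (3*(b:ℂ))^2 + ((-6:ℂ)*a*I + 3*b + 6*c) * ((2:ℂ)*a*I + b + 2*c) := by
    rw [neg_sq]; exact hmu2p
  have hlamCm : (-((lam a b c : ℝ) : ℂ)) ≠ 0 := neg_ne_zero.mpr hlamC
  refine ⟨hlam, hz1, hz2, hz3, hz4, ?_, ?_, ?_, ?_, ?_, ?_⟩
  · exact invariant_block _ _ _ _ _ _ hf1 hf2
  · exact invariant_block _ _ _ _ _ _ hf3 hf4
  · exact eig_block _ _ _ _ _ _ _ hf1 hf2 hmu1p hlamC indep12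
  · exact eig_block _ _ _ _ _ _ _ hf1 hf2 hmu1m hlamCm indep12
  · exact eig_block _ _ _ _ _ _ _ hf3 hf4 hmu2p hlamC indep34
  · exact eig_block _ _ _ _ _ _ _ hf3 hf4 hmu2m hlamCm indep34
end
end

section
/- For real (a,b,c) ≠ (0,0,0), the three 8×8 matrices Π₁ := ½(F₁ + ⅓F₂), Π₂ := ½(½F₁ − ⅙F₂ + (1/λ)F₃), Π₃ := ½(½F₁ − ⅙F₂ − (1/λ)F₃) form a complete family of mutually orthogonal idempotents: Π₁ + Π₂ + Π₃ = 1₈ and Π_j Π_k = δ_{jk} Π_j for all j,k ∈ {1,2,3}. -/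
open Matrix Complex

noncomputable section

/-- F₁ = iE₁ = 1⊗1⊗1. -/
def F1 : Matrix Q3 Q3 ℂ := 1
/-- F₂ = i(E₂+E₃+E₄). -/
def F2 : Matrix Q3 Q3 ℂ := iE2 + iE3 + iE4
/-- Π₁ = ½(F₁ + ⅓F₂). -/
def Pi1 : Matrix Q3 Q3 ℂ := (1/2 : ℂ) • (F1 + (1/3 : ℂ) • F2)
/-- Π₂ = ½(½F₁ − ⅙F₂ + (1/λ)F₃). -/
def Pi2 (a b c : ℝ) : Matrix Q3 Q3 ℂ :=
  (1/2 : ℂ) • ((1/2 : ℂ) • F1 - (1/6 : ℂ) • F2 + (((lam a b c : ℝ) : ℂ))⁻¹ • F3 a b c)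
/-- Π₃ = ½(½F₁ − ⅙F₂ − (1/λ)F₃). -/
def Pi3 (a b c : ℝ) : Matrix Q3 Q3 ℂ :=
  (1/2 : ℂ) • ((1/2 : ℂ) • F1 - (1/6 : ℂ) • F2 - (((lam a b c : ℝ) : ℂ))⁻¹ • F3 a b c)

/-- The family Π₁, Π₂, Π₃. -/
def Pis (a b c : ℝ) : Fin 3 → Matrix Q3 Q3 ℂ := ![Pi1, Pi2 a b c, Pi3 a b c]


/-! ### Auxiliary lemmas: tensor-product algebra -/

lemma tens3_mul' (A B C D E F : Matrix (Fin 2) (Fin 2) ℂ) :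
    tens3 A B C * tens3 D E F = tens3 (A*D) (B*E) (C*F) := by
  ext ⟨i,j,k⟩ ⟨i',j',k'⟩
  simp [tens3, Matrix.mul_apply, Fintype.sum_prod_type, Fin.sum_univ_two]
  ring

lemma tens3_one' : tens3 1 1 1 = (1 : Matrix Q3 Q3 ℂ) := by
  ext ⟨i,j,k⟩ ⟨i',j',k'⟩
  simp [tens3, Matrix.one_apply, Prod.ext_iff]
  split_ifs <;> simp_all

lemma tens3_smul₁ (c : ℂ) (A B C : Matrix (Fin 2) (Fin 2) ℂ) :
    tens3 (c•A) B C = c • tens3 A B C := by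
  ext ⟨i,j,k⟩ ⟨i',j',k'⟩; simp [tens3]; ring
lemma tens3_smul₂ (c : ℂ) (A B C : Matrix (Fin 2) (Fin 2) ℂ) :
    tens3 A (c•B) C = c • tens3 A B C := by
  ext ⟨i,j,k⟩ ⟨i',j',k'⟩; simp [tens3]; ring
lemma tens3_smul₃ (c : ℂ) (A B C : Matrix (Fin 2) (Fin 2) ℂ) :
    tens3 A B (c•C) = c • tens3 A B C := by
  ext ⟨i,j,k⟩ ⟨i',j',k'⟩; simp [tens3]; ring
lemma tens3_neg₁ (A B C : Matrix (Fin 2) (Fin 2) ℂ) : tens3 (-A) B C = -tens3 A B C := by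
  ext ⟨i,j,k⟩ ⟨i',j',k'⟩; simp only [tens3, Matrix.neg_apply]; ring
lemma tens3_neg₂ (A B C : Matrix (Fin 2) (Fin 2) ℂ) : tens3 A (-B) C = -tens3 A B C := by
  ext ⟨i,j,k⟩ ⟨i',j',k'⟩; simp only [tens3, Matrix.neg_apply]; ring
lemma tens3_neg₃ (A B C : Matrix (Fin 2) (Fin 2) ℂ) : tens3 A B (-C) = -tens3 A B C := by
  ext ⟨i,j,k⟩ ⟨i',j',k'⟩; simp only [tens3, Matrix.neg_apply]; ring

/-! ### Pauli multiplication table -/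

lemma sxx : sx * sx = 1 := by ext i j; fin_cases i <;> fin_cases j <;> simp [sx, Matrix.mul_apply, Fin.sum_univ_two]
lemma syy : sy * sy = 1 := by ext i j; fin_cases i <;> fin_cases j <;> simp [sy, Matrix.mul_apply, Fin.sum_univ_two]
lemma szz : sz * sz = 1 := by ext i j; fin_cases i <;> fin_cases j <;> simp [sz, Matrix.mul_apply, Fin.sum_univ_two]
lemma sxy : sx * sy = (-I) • sz := by ext i j; fin_cases i <;> fin_cases j <;> simp [sx,sy,sz, Matrix.mul_apply, Fin.sum_univ_two]
lemma syx : sy * sx = I • sz := by ext i j; fin_cases i <;> fin_cases j <;> simp [sx,sy,sz, Matrix.mul_apply, Fin.sum_univ_two]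
lemma syz : sy * sz = (-I) • sx := by ext i j; fin_cases i <;> fin_cases j <;> simp [sx,sy,sz, Matrix.mul_apply, Fin.sum_univ_two]
lemma szy : sz * sy = I • sx := by ext i j; fin_cases i <;> fin_cases j <;> simp [sx,sy,sz, Matrix.mul_apply, Fin.sum_univ_two]
lemma szx : sz * sx = (-I) • sy := by ext i j; fin_cases i <;> fin_cases j <;> simp [sx,sy,sz, Matrix.mul_apply, Fin.sum_univ_two]
lemma sxz : sx * sz = I • sy := by ext i j; fin_cases i <;> fin_cases j <;> simp [sx,sy,sz, Matrix.mul_apply, Fin.sum_univ_two]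

/-! ### Key structural identities for F₂ and F₃ -/

lemma hF2F2 : F2 * F2 = (9:ℂ) • 1 := by
  simp only [F2, iE2, iE3, iE4, add_mul, mul_add, tens3_mul', one_mul, mul_one,
    sxx, syy, szz, sxy, syx, syz, szy, szx, sxz,
    tens3_smul₁, tens3_smul₂, tens3_smul₃, tens3_neg₁, tens3_neg₂, tens3_neg₃, smul_neg,
    smul_smul, tens3_one', Complex.I_mul_I, neg_mul, mul_neg, neg_neg, neg_smul, one_smul]
  module

lemma hF2F3 (a b c : ℝ) : F2 * F3 a b c = (-3:ℂ) • F3 a b c := by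
  simp only [F2, F3, iE2, iE3, iE4, iE5, add_mul, mul_add, sub_mul, mul_sub,
    smul_mul_assoc, mul_smul_comm, smul_add, smul_sub, tens3_mul', one_mul, mul_one,
    sxx, syy, szz, sxy, syx, syz, szy, szx, sxz,
    tens3_smul₁, tens3_smul₂, tens3_smul₃, tens3_neg₁, tens3_neg₂, tens3_neg₃, smul_neg,
    smul_smul, tens3_one', Complex.I_mul_I, neg_mul, mul_neg, neg_neg, neg_smul, one_smul]
  module

lemma hF3F2 (a b c : ℝ) : F3 a b c * F2 = (-3:ℂ) • F3 a b c := by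
  simp only [F2, F3, iE2, iE3, iE4, iE5, add_mul, mul_add, sub_mul, mul_sub,
    smul_mul_assoc, mul_smul_comm, smul_add, smul_sub, tens3_mul', one_mul, mul_one,
    sxx, syy, szz, sxy, syx, syz, szy, szx, sxz,
    tens3_smul₁, tens3_smul₂, tens3_smul₃, tens3_neg₁, tens3_neg₂, tens3_neg₃, smul_neg,
    smul_smul, tens3_one', Complex.I_mul_I, neg_mul, mul_neg, neg_neg, neg_smul, one_smul]
  module

lemma hF3F3 (a b c : ℝ) : F3 a b c * F3 a b c =
    (12*(a:ℂ)^2+12*(b:ℂ)^2+12*(c:ℂ)^2+12*(b:ℂ)*(c:ℂ)) •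
      ((1/2:ℂ) • (1 : Matrix Q3 Q3 ℂ) - (1/6:ℂ) • F2) := by
  simp only [F2, F3, iE2, iE3, iE4, iE5, add_mul, mul_add, sub_mul, mul_sub,
    smul_mul_assoc, mul_smul_comm, smul_add, smul_sub, tens3_mul', one_mul, mul_one,
    sxx, syy, szz, sxy, syx, syz, szy, szx, sxz,
    tens3_smul₁, tens3_smul₂, tens3_smul₃, tens3_neg₁, tens3_neg₂, tens3_neg₃, smul_neg,
    smul_smul, tens3_one', Complex.I_mul_I, neg_mul, mul_neg, neg_neg, neg_smul, one_smul]
  module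

/-- for (a,b,c) ≠ (0,0,0), the matrices Π₁, Π₂, Π₃ form a complete family
of mutually orthogonal idempotents: Π₁+Π₂+Π₃ = 1 and Π_jΠ_k = δ_{jk}Π_j. -/
theorem statement4 (a b c : ℝ) (habc : (a, b, c) ≠ (0, 0, 0)) :
    Pi1 + Pi2 a b c + Pi3 a b c = 1 ∧
    ∀ j k : Fin 3, Pis a b c j * Pis a b c k = if j = k then Pis a b c j else 0 := by
  -- positivity of the radicand
  have h0 : 0 < 3*a^2 + 3*b^2 + 3*c^2 + 3*b*c := by
    have h : ¬(a = 0 ∧ b = 0 ∧ c = 0) := by simpa [Prod.ext_iff] using habc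
    rcases eq_or_ne a 0 with ha | ha
    · rcases eq_or_ne b 0 with hb | hb
      · have hc : c ≠ 0 := by tauto
        have := mul_self_pos.mpr hc
        nlinarith [sq_nonneg (b+c), sq_nonneg b]
      · have := mul_self_pos.mpr hb
        nlinarith [sq_nonneg (b+c), sq_nonneg c, sq_nonneg a]
    · have := mul_self_pos.mpr ha
      nlinarith [sq_nonneg (b+c), sq_nonneg b, sq_nonneg c]
  have hlpos : 0 < lam a b c := by
    have hs : 0 < Real.sqrt (3*a^2+3*b^2+3*c^2+3*b*c) := Real.sqrt_pos.mpr h0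
    unfold lam; linarith
  have hlsq : (lam a b c) * (lam a b c) = 12*a^2+12*b^2+12*c^2+12*b*c := by
    unfold lam
    have : Real.sqrt (3*a^2+3*b^2+3*c^2+3*b*c) * Real.sqrt (3*a^2+3*b^2+3*c^2+3*b*c)
        = 3*a^2+3*b^2+3*c^2+3*b*c := Real.mul_self_sqrt h0.le
    nlinarith [this]
  have hlne : ((lam a b c : ℝ) : ℂ) ≠ 0 := by
    exact_mod_cast Complex.ofReal_ne_zero.mpr (ne_of_gt hlpos)
  have hm : ((lam a b c : ℝ) : ℂ) * ((lam a b c : ℝ) : ℂ)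
      = 12*(a:ℂ)^2+12*(b:ℂ)^2+12*(c:ℂ)^2+12*(b:ℂ)*(c:ℂ) := by
    rw [← Complex.ofReal_mul, hlsq]; push_cast; ring
  set C : Matrix Q3 Q3 ℂ := ((lam a b c : ℝ) : ℂ)⁻¹ • F3 a b c with hC
  have hCC : C * C = (1/2:ℂ) • (1 : Matrix Q3 Q3 ℂ) - (1/6:ℂ) • F2 := by
    rw [hC, smul_mul_assoc, mul_smul_comm, smul_smul, hF3F3, smul_smul]
    have hone : ((lam a b c : ℝ) : ℂ)⁻¹ * ((lam a b c : ℝ) : ℂ)⁻¹ *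
        (12*(a:ℂ)^2+12*(b:ℂ)^2+12*(c:ℂ)^2+12*(b:ℂ)*(c:ℂ)) = 1 := by
      rw [← hm]; field_simp
    rw [hone, one_smul]
  have hF2C : F2 * C = (-3:ℂ) • C := by
    rw [hC, mul_smul_comm, hF2F3, smul_comm]
  have hCF2 : C * F2 = (-3:ℂ) • C := by
    rw [hC, smul_mul_assoc, hF3F2, smul_comm]
  constructor
  · simp only [Pi1, Pi2, Pi3, F1, ← hC]
    module
  · intro j k
    fin_cases j <;> fin_cases k <;>
      simp only [Pis, Fin.isValue, Matrix.cons_val_zero, Matrix.cons_val_one,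
        Matrix.head_cons, Matrix.cons_val_two, Matrix.tail_cons, Fin.mk_one,
        if_true, reduceIte, Fin.reduceEq, Fin.zero_eta, Fin.reduceFinMk] <;>
      simp only [Pi1, Pi2, Pi3, F1, ← hC, mul_add, add_mul, mul_sub, sub_mul,
        smul_mul_assoc, mul_smul_comm, smul_smul, one_mul, mul_one,
        hF2F2, hF2C, hCF2, hCC] <;>
      module
end
end

section
/- Let ψ := c₀φ₀ + c₁φ₁ + c₂φ₂ + c₃φ₃ be a nonzero state in the symmetric sector of three qubits. Then ψ is a product state (i.e., ψ = α⊗β⊗γ for some α, β, γ ∈ ℂ²) if and only if X₂ = X₃ = X₄ = 0; moreover, in that case there exists φ ∈ ℂ² such that ψ = φ⊗φ⊗φ. -/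
open Matrix Complex

noncomputable section

/-- Tensor product of three vectors in ℂ². -/
def tensv (α β γ : Fin 2 → ℂ) : Q3 → ℂ := fun p => α p.1 * β p.2.1 * γ p.2.2

lemma psi_comp (c0 c1 c2 c3 : ℂ) :
    (c0 • phi0 + c1 • phi1 + c2 • phi2 + c3 • phi3) (0,0,0) = c0 ∧
    (c0 • phi0 + c1 • phi1 + c2 • phi2 + c3 • phi3) (1,0,0) = c1 ∧
    (c0 • phi0 + c1 • phi1 + c2 • phi2 + c3 • phi3) (0,1,0) = c1 ∧
    (c0 • phi0 + c1 • phi1 + c2 • phi2 + c3 • phi3) (0,0,1) = c1 ∧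
    (c0 • phi0 + c1 • phi1 + c2 • phi2 + c3 • phi3) (1,1,0) = c2 ∧
    (c0 • phi0 + c1 • phi1 + c2 • phi2 + c3 • phi3) (0,1,1) = c2 ∧
    (c0 • phi0 + c1 • phi1 + c2 • phi2 + c3 • phi3) (1,0,1) = c2 ∧
    (c0 • phi0 + c1 • phi1 + c2 • phi2 + c3 • phi3) (1,1,1) = c3 := by
  refine ⟨?_, ?_, ?_, ?_, ?_, ?_, ?_, ?_⟩ <;>
    simp [phi0, phi1, phi2, phi3, ket, Prod.ext_iff, Fin.ext_iff]

lemma key (c0 c1 c2 c3 : ℂ)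
    (h2 : c0 * c2 - c1 ^ 2 = 0) (h3 : c0 * c3 - c1 * c2 = 0)
    (h4 : c1 * c3 - c2 ^ 2 = 0) :
    ∃ φ : Fin 2 → ℂ,
      c0 • phi0 + c1 • phi1 + c2 • phi2 + c3 • phi3 = tensv φ φ φ := by
  by_cases hc0 : c0 = 0
  · have hc1 : c1 = 0 := by
      have : c1 ^ 2 = 0 := by linear_combination -h2 + c2 * hc0
      exact pow_eq_zero_iff (by norm_num) |>.mp this
    have hc2 : c2 = 0 := by
      have : c2 ^ 2 = 0 := by linear_combination -h4 + c3 * hc1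
      exact pow_eq_zero_iff (by norm_num) |>.mp this
    obtain ⟨s, hs⟩ := Complex.isAlgClosed.exists_pow_nat_eq c3 (n := 3) (by norm_num)
    refine ⟨fun i => if i = 0 then 0 else s, ?_⟩
    funext p
    obtain ⟨j, k, l⟩ := p
    fin_cases j <;> fin_cases k <;> fin_cases l <;>
      simp [phi0, phi1, phi2, phi3, ket, tensv, Prod.ext_iff, Fin.ext_iff] <;>
      first | exact hc0 | exact hc1 | exact hc2 | linear_combination -hs
  · obtain ⟨s, hs⟩ := Complex.isAlgClosed.exists_pow_nat_eq c0 (n := 3) (by norm_num)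
    refine ⟨fun i => if i = 0 then s else s * c1 / c0, ?_⟩
    funext p
    obtain ⟨j, k, l⟩ := p
    fin_cases j <;> fin_cases k <;> fin_cases l <;>
      simp [phi0, phi1, phi2, phi3, ket, tensv, Prod.ext_iff, Fin.ext_iff] <;>
      first
        | linear_combination -hs
        | (field_simp
           first
             | linear_combination c1 * hs
             | linear_combination -c1 * hs
             | linear_combination -c1^2 * hs + c0 * h2
             | linear_combination c1^2 * hs - c0 * h2
             | linear_combination -c1^3 * hs + c0^2 * h3 + c0 * c1 * h2
             | linear_combination c1^3 * hs - c0^2 * h3 - c0 * c1 * h2)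

/-- a nonzero symmetric-sector state ψ = c₀φ₀+c₁φ₁+c₂φ₂+c₃φ₃ is a product
state iff X₂ = X₃ = X₄ = 0, and in that case it is a symmetric product φ⊗φ⊗φ. -/
theorem statement5 (c0 c1 c2 c3 : ℂ)
    (hne : c0 • phi0 + c1 • phi1 + c2 • phi2 + c3 • phi3 ≠ 0) :
    ((∃ α β γ : Fin 2 → ℂ,
        c0 • phi0 + c1 • phi1 + c2 • phi2 + c3 • phi3 = tensv α β γ) ↔
      (c0 * c2 - c1 ^ 2 = 0 ∧ c0 * c3 - c1 * c2 = 0 ∧ c1 * c3 - c2 ^ 2 = 0)) ∧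
    ((∃ α β γ : Fin 2 → ℂ,
        c0 • phi0 + c1 • phi1 + c2 • phi2 + c3 • phi3 = tensv α β γ) →
      ∃ φ : Fin 2 → ℂ,
        c0 • phi0 + c1 • phi1 + c2 • phi2 + c3 • phi3 = tensv φ φ φ) := by
  have fwd : (∃ α β γ : Fin 2 → ℂ,
      c0 • phi0 + c1 • phi1 + c2 • phi2 + c3 • phi3 = tensv α β γ) →
      (c0 * c2 - c1 ^ 2 = 0 ∧ c0 * c3 - c1 * c2 = 0 ∧ c1 * c3 - c2 ^ 2 = 0) := by
    rintro ⟨α, β, γ, h⟩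
    obtain ⟨e0, e1, e2, e3, e4, e5, e6, e7⟩ := psi_comp c0 c1 c2 c3
    rw [h] at e0 e1 e2 e3 e4 e5 e6 e7
    simp only [tensv] at e0 e1 e2 e3 e4 e5 e6 e7
    refine ⟨?_, ?_, ?_⟩
    · rw [← e0, ← e4]
      linear_combination (α 0 * β 1 * γ 0) * e1 + c1 * e2
    · rw [← e0, ← e7]
      linear_combination (α 0 * β 1 * γ 1) * e1 + c1 * e5
    · rw [← e3, ← e7]
      linear_combination (α 1 * β 0 * γ 1) * e5 + c2 * e6
  refine ⟨⟨fwd, ?_⟩, ?_⟩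
  · rintro ⟨h2, h3, h4⟩
    obtain ⟨φ, hφ⟩ := key c0 c1 c2 c3 h2 h3 h4
    exact ⟨φ, φ, φ, hφ⟩
  · intro h
    obtain ⟨h2, h3, h4⟩ := fwd h
    exact key c0 c1 c2 c3 h2 h3 h4
end
end

section
/- Let ψ := c₀φ₀ + c₁φ₁ + c₂φ₂ + c₃φ₃ be a nonzero state in the symmetric sector of three qubits. If both the three-tangle τ(ψ) = 4|X₃² − 4X₂X₄| and the pairwise tangle τ_AB(ψ) = 2(|X₃|² + 2|X₂|² + 2|X₄|² − |X₃² − 4X₂X₄|) are zero, then ψ is separable: there exists φ ∈ ℂ² with ψ = φ⊗φ⊗φ. -/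
open Matrix Complex

noncomputable section

/-! The vanishing three-tangle kills `X₃² − 4X₂X₄`, after which the vanishing pairwise tangle
reads `|X₃|² + 2|X₂|² + 2|X₄|² = 0`, so `X₂ = X₃ = X₄ = 0`. These are the 2×2 minors of
`[[c₀, c₁, c₂], [c₁, c₂, c₃]]`, and their vanishing puts `(c₀, c₁, c₂, c₃)` on the twisted cubic
`(a³, a²b, ab², b³)`, which is exactly the coefficient vector of `(a, b)^{⊗3}`. -/

section TwistedCubic

variable {K : Type*} [Field K] [IsAlgClosed K]

theorem exists_twistedCubic_of_minors_eq_zero {c0 c1 c2 c3 : K}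
    (h2 : c0 * c2 = c1 ^ 2) (h3 : c0 * c3 = c1 * c2) (h4 : c1 * c3 = c2 ^ 2) :
    ∃ a b : K, c0 = a ^ 3 ∧ c1 = a ^ 2 * b ∧ c2 = a * b ^ 2 ∧ c3 = b ^ 3 := by
  obtain ⟨a, rfl⟩ := IsAlgClosed.exists_pow_nat_eq c0 (n := 3) (by norm_num)
  by_cases ha : a = 0
  · subst ha
    have hc1 : c1 = 0 := pow_eq_zero_iff two_ne_zero |>.mp (by rw [← h2]; ring)
    have hc2 : c2 = 0 := pow_eq_zero_iff two_ne_zero |>.mp (by rw [← h4, hc1]; ring)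
    obtain ⟨b, rfl⟩ := IsAlgClosed.exists_pow_nat_eq c3 (n := 3) (by norm_num)
    exact ⟨0, b, by ring, by simp [hc1], by simp [hc2], rfl⟩
  · -- `b = c₁ / a²`; the minors then force `c₂ = c₁² / c₀` and `c₃ = c₁ c₂ / c₀`.
    have ha3 : a ^ 3 ≠ 0 := pow_ne_zero 3 ha
    have hc2 : c2 = c1 ^ 2 / a ^ 3 := by field_simp; linear_combination h2
    have hc3 : c3 = c1 * c2 / a ^ 3 := by field_simp; linear_combination h3
    refine ⟨a, c1 / a ^ 2, rfl, by field_simp, ?_, ?_⟩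
    · rw [hc2]; field_simp
    · rw [hc3, hc2]; field_simp

end TwistedCubic

theorem twistedCubic_smul_phi_eq_tensv (a b : ℂ) :
    a ^ 3 • phi0 + (a ^ 2 * b) • phi1 + (a * b ^ 2) • phi2 + b ^ 3 • phi3 =
      tensv ![a, b] ![a, b] ![a, b] := by
  funext ⟨j, k, l⟩
  fin_cases j <;> fin_cases k <;> fin_cases l <;>
    simp [phi0, phi1, phi2, phi3, ket, tensv, -mul_eq_mul_left_iff, -mul_eq_mul_right_iff] <;> ring

theorem eq_zero_of_sq_norm_add_eq_zero {E : Type*} [NormedAddCommGroup E] {x y z : E}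
    (h : ‖x‖ ^ 2 + 2 * ‖y‖ ^ 2 + 2 * ‖z‖ ^ 2 = 0) : x = 0 ∧ y = 0 ∧ z = 0 := by
  have hx := sq_nonneg ‖x‖
  have hy := sq_nonneg ‖y‖
  have hz := sq_nonneg ‖z‖
  refine ⟨?_, ?_, ?_⟩ <;> rw [← norm_eq_zero, ← sq_eq_zero_iff] <;> linarith

theorem statement9_general (c0 c1 c2 c3 : ℂ)
    (htau : 4 * ‖(c0 * c3 - c1 * c2) ^ 2
      - 4 * (c0 * c2 - c1 ^ 2) * (c1 * c3 - c2 ^ 2)‖ = 0)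
    (htauAB : 2 * (‖c0 * c3 - c1 * c2‖ ^ 2
      + 2 * ‖c0 * c2 - c1 ^ 2‖ ^ 2
      + 2 * ‖c1 * c3 - c2 ^ 2‖ ^ 2
      - ‖(c0 * c3 - c1 * c2) ^ 2
          - 4 * (c0 * c2 - c1 ^ 2) * (c1 * c3 - c2 ^ 2)‖) = 0) :
    ∃ φ : Fin 2 → ℂ,
      c0 • phi0 + c1 • phi1 + c2 • phi2 + c3 • phi3 = tensv φ φ φ := by
  obtain ⟨h3, h2, h4⟩ := eq_zero_of_sq_norm_add_eq_zero (by linarith : ‖c0 * c3 - c1 * c2‖ ^ 2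
    + 2 * ‖c0 * c2 - c1 ^ 2‖ ^ 2 + 2 * ‖c1 * c3 - c2 ^ 2‖ ^ 2 = 0)
  obtain ⟨a, b, rfl, rfl, rfl, rfl⟩ := exists_twistedCubic_of_minors_eq_zero
    (sub_eq_zero.mp h2) (sub_eq_zero.mp h3) (sub_eq_zero.mp h4)
  exact ⟨![a, b], twistedCubic_smul_phi_eq_tensv a b⟩

/-- if a nonzero symmetric-sector state ψ = c₀φ₀+c₁φ₁+c₂φ₂+c₃φ₃ has
vanishing three-tangle τ = 4|X₃²−4X₂X₄| and vanishing pairwise tangle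
τ_AB = 2(|X₃|²+2|X₂|²+2|X₄|²−|X₃²−4X₂X₄|), then ψ = φ⊗φ⊗φ for some φ ∈ ℂ². -/
theorem statement9 (c0 c1 c2 c3 : ℂ)
    (hne : c0 • phi0 + c1 • phi1 + c2 • phi2 + c3 • phi3 ≠ 0)
    (htau : 4 * ‖(c0 * c3 - c1 * c2) ^ 2
      - 4 * (c0 * c2 - c1 ^ 2) * (c1 * c3 - c2 ^ 2)‖ = 0)
    (htauAB : 2 * (‖c0 * c3 - c1 * c2‖ ^ 2
      + 2 * ‖c0 * c2 - c1 ^ 2‖ ^ 2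
      + 2 * ‖c1 * c3 - c2 ^ 2‖ ^ 2
      - ‖(c0 * c3 - c1 * c2) ^ 2
          - 4 * (c0 * c2 - c1 ^ 2) * (c1 * c3 - c2 ^ 2)‖) = 0) :
    ∃ φ : Fin 2 → ℂ,
      c0 • phi0 + c1 • phi1 + c2 • phi2 + c3 • phi3 = tensv φ φ φ :=
  statement9_general c0 c1 c2 c3 htau htauAB
end
end
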